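/- In the sl(N) Onsager algebra A_N (N ≥ 3), the cyclic sum of the length-N strings vanishes: S_1(N) + S_2(N) + ... + S_N(N) = 0, i.e., Σ_{k=1}^N [e_k,[e_{k+1},...,e_{k+N-1}]...] = 0. -/

import Mathlib

noncomputable section

/-- The generalized Dolan–Grady relations for a cyclic family `e` of `N` elements. -/
def DolanGrady {N : ℕ} [NeZero N] {L : Type*} [LieRing L] (e : Fin N → L) : Prop :=
  (∀ i j : Fin N, (j = i + 1 ∨ i = j + 1) → ⁅e i, ⁅e i, e j⁆⁆ = e j) ∧
  (∀ i j : Fin N, i ≠ j → j ≠ i + 1 → i ≠ j + 1 → ⁅e i, e j⁆ = 0)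

/-- The right-nested string `S_k(r) = [e_k,[e_{k+1},...,e_{k+r-1}]...]`, with `S _ 0 = 0`. -/
def S {N : ℕ} [NeZero N] {L : Type*} [LieRing L] (e : Fin N → L) : ℕ → Fin N → L
  | 0, _ => 0
  | 1, k => e k
  | (r + 2), k => ⁅e k, S e (r + 1) (k + 1)⁆

open Fin.NatCast

/-! Put `T = ∑ₖ S_k(N)` and `G(r, s) = ∑ₖ [S_k(r), S_{k+r}(s)]` for `r + s = N`.
Expanding `S_k(r+1) = [e_k, S_{k+1}(r)]` by Jacobi and using that non-adjacent generators commute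
gives `G(r+1, s) = T + G(r, s+1)`, hence `G(r, s) = r • T`. On the other hand a cyclic shift
and antisymmetry give `G(r, s) = -G(s, r)`, so `(N - 1) • T = -T`: thus `N • T = 0`, and `T = 0`
in characteristic zero. -/

open Fin.CommRing

def NonadjacentCommute {N : ℕ} [NeZero N] {L : Type*} [LieRing L] (e : Fin N → L) : Prop :=
  ∀ i j : Fin N, i ≠ j → j ≠ i + 1 → i ≠ j + 1 → ⁅e i, e j⁆ = 0

section

variable {N : ℕ} [NeZero N] {L : Type*} [LieRing L] {e : Fin N → L}

theorem Fin.natCast_ne_natCast_of_lt_of_lt_add {a b : ℕ} (hab : a < b) (hba : b < a + N) :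
    (a : Fin N) ≠ b := by
  rw [Ne, CharP.natCast_eq_natCast (Fin N) N, Nat.modEq_iff_dvd' hab.le]
  exact fun h => absurd (Nat.le_of_dvd (by omega) h) (by omega)

theorem S_add_one {m : ℕ} (hm : m ≠ 0) (k : Fin N) :
    S e (m + 1) k = ⁅e k, S e m (k + 1)⁆ := by
  obtain ⟨m, rfl⟩ := Nat.exists_eq_succ_of_ne_zero hm
  rfl

theorem lie_S_eq_zero (x : L) : ∀ (r : ℕ) (k : Fin N),
    (∀ i < r, ⁅x, e (k + i)⁆ = 0) → ⁅x, S e r k⁆ = 0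
  | 0, _, _ => lie_zero x
  | 1, k, h => by simpa [S] using h 0 one_pos
  | r + 2, k, h => by
    have h₀ : ⁅x, e k⁆ = 0 := by simpa using h 0 (by omega)
    have h₁ : ⁅x, S e (r + 1) (k + 1)⁆ = 0 := lie_S_eq_zero x (r + 1) (k + 1) fun i hi => by
      simpa [add_assoc, add_comm (1 : Fin N)] using h (i + 1) (by omega)
    rw [S, leibniz_lie, h₀, h₁, zero_lie, lie_zero, add_zero]

theorem sum_lie_S_S_eq_neg {r s : ℕ} (hrs : r + s = N) :
    ∑ k : Fin N, ⁅S e r k, S e s (k + r)⁆ = -∑ k : Fin N, ⁅S e s k, S e r (k + s)⁆ := by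
  have hcycle : (r : Fin N) + s = 0 := by rw [← Nat.cast_add, hrs, Fin.natCast_self]
  rw [← Finset.sum_neg_distrib]
  refine Fintype.sum_equiv (Equiv.addRight (r : Fin N)) _ _ fun k => ?_
  rw [Equiv.coe_addRight, add_assoc, hcycle, add_zero, lie_skew]

namespace NonadjacentCommute

theorem lie_eq_zero (he : NonadjacentCommute e) (p : Fin N) {a b : ℕ} (hab : a + 2 ≤ b)
    (hba : b + 2 ≤ a + N) : ⁅e (p + a), e (p + b)⁆ = 0 := by
  have hne (a' b' : ℕ) (h₁ : a' < b') (h₂ : b' < a' + N) : (a' : Fin N) ≠ b' :=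
    Fin.natCast_ne_natCast_of_lt_of_lt_add h₁ h₂
  refine he _ _ (fun h => hne a b (by omega) (by omega) ?_)
    (fun h => hne (a + 1) b (by omega) (by omega) ?_)
    (fun h => hne a (b + 1) (by omega) (by omega) ?_)
  · linear_combination h
  · push_cast
    linear_combination -h
  · push_cast
    linear_combination h

theorem lie_S_eq_neg_S_add_one (he : NonadjacentCommute e) :
    ∀ (b : ℕ) (k : Fin N), 1 ≤ b → b + 2 ≤ N → ⁅e (k + b), S e b k⁆ = -S e (b + 1) k
  | 1, k, _, _ => by rw [Nat.cast_one, ← lie_skew]; rfl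
  | b + 2, k, _, hN => by
    have hk : ⁅e (k + (b + 2 : ℕ)), e k⁆ = 0 := by
      rw [← lie_skew, neg_eq_zero]
      simpa using he.lie_eq_zero k (a := 0) (b := b + 2) (by omega) (by omega)
    have hshift : k + ((b + 2 : ℕ) : Fin N) = k + 1 + (b + 1 : ℕ) := by push_cast; ring
    rw [S, leibniz_lie, hk, zero_lie, zero_add, hshift,
      he.lie_S_eq_neg_S_add_one (b + 1) (k + 1) (by omega) (by omega), lie_neg,
      ← S_add_one (by omega)]

theorem lie_S_S_eq_S_add (he : NonadjacentCommute e) :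
    ∀ (a b : ℕ) (k : Fin N), 1 ≤ a → 1 ≤ b → a + b + 1 ≤ N →
      ⁅S e a k, S e b (k + a)⁆ = S e (a + b) k
  | 1, b, k, _, hb, _ => by rw [Nat.cast_one, add_comm 1 b, S_add_one (m := b) (by omega)]; rfl
  | a + 2, b, k, _, hb, hN => by
    have hk : ⁅e k, S e b (k + (a + 2 : ℕ))⁆ = 0 := lie_S_eq_zero _ _ _ fun i hi => by
      simpa [add_assoc] using he.lie_eq_zero k (a := 0) (b := a + 2 + i) (by omega) (by omega)
    have hshift : k + ((a + 2 : ℕ) : Fin N) = k + 1 + (a + 1 : ℕ) := by push_cast; ring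
    rw [S, lie_lie, hk, lie_zero, sub_zero, hshift,
      he.lie_S_S_eq_S_add (a + 1) b (k + 1) (by omega) hb (by omega), ← S_add_one (by omega),
      add_right_comm]

-- In `[[e_k, S_{k+1}(r)], S_{k+r+1}(s)]`, `e_k` meets only the last letter `e_{k-1}`.
theorem lie_S_add_one_S (he : NonadjacentCommute e) {r s : ℕ} (hr : 1 ≤ r) (hs : 1 ≤ s)
    (hrs : r + s + 1 = N) (k : Fin N) :
    ⁅S e (r + 1) k, S e s (k + (r + 1 : ℕ))⁆
      = S e N k + ⁅S e r (k + 1), S e (s + 1) (k + 1 + r)⁆ := by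
  have hshift : k + ((r + 1 : ℕ) : Fin N) = k + 1 + r := by push_cast; ring
  have hcycle : k + 1 + r + s = k := by
    have h : ((r + s + 1 : ℕ) : Fin N) = 0 := by rw [hrs, Fin.natCast_self]
    push_cast at h
    linear_combination h
  have hk : ⁅e k, S e s (k + 1 + r)⁆ = -S e (s + 1) (k + 1 + r) := by
    simpa only [hcycle] using he.lie_S_eq_neg_S_add_one s (k + 1 + r) hs (by omega)
  rw [S_add_one (by omega), hshift, lie_lie, he.lie_S_S_eq_S_add r s (k + 1) hr hs (by omega),
    hk, lie_neg, sub_neg_eq_add, ← S_add_one (by omega), hrs]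

theorem sum_lie_S_S (he : NonadjacentCommute e) :
    ∀ (r s : ℕ), 1 ≤ r → 1 ≤ s → r + s = N →
      ∑ k : Fin N, ⁅S e r k, S e s (k + r)⁆ = r • ∑ k : Fin N, S e N k
  | 1, s, _, hs, hrs => by
    rw [one_smul]
    refine Finset.sum_congr rfl fun k _ => ?_
    rw [Nat.cast_one]
    exact (S_add_one (by omega) k).symm.trans (congrArg (S e · k) (by omega))
  | r + 2, s, _, hs, hrs => by
    have hshift := Fintype.sum_equiv (Equiv.addRight (1 : Fin N))
      (fun k => ⁅S e (r + 1) (k + 1), S e (s + 1) (k + 1 + (r + 1 : ℕ))⁆)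
      (fun k => ⁅S e (r + 1) k, S e (s + 1) (k + (r + 1 : ℕ))⁆) fun _ => rfl
    simp_rw [he.lie_S_add_one_S (r := r + 1) (by omega) hs (by omega)]
    rw [Finset.sum_add_distrib, hshift,
      he.sum_lie_S_S (r + 1) (s + 1) (by omega) (by omega) (by omega), succ_nsmul' _ (r + 1),
      succ_nsmul']

theorem nsmul_sum_S_eq_zero (he : NonadjacentCommute e) (hN : 2 ≤ N) :
    N • ∑ k : Fin N, S e N k = 0 := by
  have hsplit : N - 1 + 1 = N := by omega
  have hanti := sum_lie_S_S_eq_neg (e := e) hsplit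
  rw [he.sum_lie_S_S (N - 1) 1 (by omega) le_rfl hsplit,
    he.sum_lie_S_S 1 (N - 1) le_rfl (by omega) (by omega), one_smul] at hanti
  nth_rw 1 [← hsplit]
  rw [succ_nsmul, hanti, neg_add_cancel]

end NonadjacentCommute

end

/-- If `e_1,…,e_N` (`N ≥ 3`) satisfy the generalized Dolan–Grady relations,
then the cyclic sum of the length-`N` strings vanishes: `S_1(N) + S_2(N) + ⋯ + S_N(N) = 0`. -/
theorem cyclic_sum_of_closed_strings_vanishes (N : ℕ) (hN : 3 ≤ N) [NeZero N]
    {L : Type*} [LieRing L] [LieAlgebra ℂ L]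
    (e : Fin N → L) (hDG : DolanGrady e) :
    ∑ k ∈ Finset.range N, S e N (((k + 1 : ℕ) : Fin N)) = 0 := by
  have hcomm : NonadjacentCommute e := hDG.2
  have hshift :
      ∑ k ∈ Finset.range N, S e N (((k + 1 : ℕ) : Fin N)) = ∑ k : Fin N, S e N k := by
    rw [← Fin.sum_univ_eq_sum_range (fun k => S e N ((k + 1 : ℕ) : Fin N))]
    simp only [Nat.cast_add, Fin.cast_val_eq_self, Nat.cast_one]
    exact Fintype.sum_equiv (Equiv.addRight 1) _ _ fun _ => rfl
  have hNT : (N : ℂ) • ∑ k : Fin N, S e N k = 0 := by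
    rw [Nat.cast_smul_eq_nsmul]
    exact hcomm.nsmul_sum_S_eq_zero (by omega)
  rw [hshift]
  exact (smul_eq_zero.mp hNT).resolve_left (Nat.cast_ne_zero.mpr (by omega))
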